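/- Suppose p = q. Then, with c̃_n and λ̃_{n+1} defined from the coefficients b̃_{k,n} by c̃_1 = −b̃_{0,1}/b̃_{1,1}, c̃_{n+1} = b̃_{n−1,n}/b̃_{n,n} − b̃_{n,n+1}/b̃_{n+1,n+1} and λ̃_{n+1} = (b̃_{n−1,n−1}/b̃_{n,n})², one has for all n ≥ 1: c̃_n = (1 + q³ − (1+q²)·q^n)·q^{−2n−1/2} and λ̃_{n+1} = (1−q^n)²·q^{−4n}. Moreover, in this case b̃_{k,n} = (−1)^{n+k}·q^{−n/2−1/4}·[n choose k]_q·(q^{k²+k/2}/(q;q)_{k+1})·[1 − q^{k+1} − (1−q^k)(1−q^{n+1})]. -/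

import Mathlib

/-!
For `p = q` the functional equation `(z;q)_∞ = (1 - z) (zq;q)_∞` gives
`Δ_n = q^n (q^{n+1};q)_∞` and `(q^{n+1};q)_∞ / (q^{n+2};q)_∞ = 1 - q^{n+1}`, so every
infinite product cancels: `C̃_n = (-1)^n q^{-n/2-1/4}` and `b̃_{k,n}` becomes a finite
expression. The recurrence coefficients only involve `b̃_{n,n} = q^{n²+n-1/4} / (q;q)_n` and
`b̃_{n,n+1}`, whose ratios are a power of `q` times finite factors, so the formulas for `c̃_n`
and `λ̃_{n+1}` reduce to polynomial identities in `q` and `q^n`.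
-/

/-- Finite q-shifted factorial `(z;q)_n`. -/
noncomputable def qp (z q : ℝ) (n : ℕ) : ℝ := ∏ k ∈ Finset.range n, (1 - z * q ^ k)

/-- Infinite q-shifted factorial `(z;q)_∞`. -/
noncomputable def qpInf (z q : ℝ) : ℝ := ∏' k : ℕ, (1 - z * q ^ k)

/-- Gaussian q-binomial coefficient. -/
noncomputable def qbinom (q : ℝ) (n k : ℕ) : ℝ := qp q q n / (qp q q k * qp q q (n - k))

/-- `Δ_n = (pq^n;q)_∞ − (q^n;q)_∞`. -/
noncomputable def Δ (p q : ℝ) (n : ℕ) : ℝ := qpInf (p * q ^ n) q - qpInf (q ^ n) q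

/-- The normalizing constant `C̃_n`. -/
noncomputable def Ct (p q : ℝ) (n : ℕ) : ℝ :=
  (-1) ^ n * q ^ ((n : ℝ) / 2 + 1 / 4) * Real.sqrt (qp p q (n + 1) / qp q q n) *
    qpInf (p * q ^ (n + 1)) q / Real.sqrt (Δ p q n * Δ p q (n + 1))

/-- Coefficients `b̃_{k,n}` of the modified generalized Stieltjes–Wigert
orthonormal polynomials. -/
noncomputable def bt (p q : ℝ) (k n : ℕ) : ℝ :=
  Ct p q n * (-1) ^ k * qbinom q n k * (q ^ ((k : ℝ) ^ 2 + (k : ℝ) / 2) / qp p q k) *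
    (1 - (1 - q ^ k) / (1 - p * q ^ k) * (qpInf (q ^ (n + 1)) q / qpInf (p * q ^ (n + 1)) q))

lemma summable_neg_mul_pow (z : ℝ) {q : ℝ} (hq : |q| < 1) :
    Summable fun k : ℕ => -(z * q ^ k) :=
  ((summable_geometric_of_abs_lt_one hq).mul_left z).neg

lemma qpInf_multipliable (z : ℝ) {q : ℝ} (hq : |q| < 1) :
    Multipliable fun k : ℕ => 1 - z * q ^ k := by
  simpa only [sub_eq_add_neg] using
    Real.multipliable_one_add_of_summable (summable_neg_mul_pow z hq)

lemma qpInf_eq_one_sub_mul (z : ℝ) {q : ℝ} (hq : |q| < 1) :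
    qpInf z q = (1 - z) * qpInf (z * q) q := by
  have hshift (k : ℕ) : 1 - z * q ^ (k + 1) = 1 - z * q * q ^ k := by ring
  rw [qpInf, qpInf,
    tprod_eq_zero_mul' ((qpInf_multipliable (z * q) hq).congr fun k => (hshift k).symm),
    pow_zero, mul_one, tprod_congr hshift]

lemma one_sub_mul_pow_pos {z q : ℝ} (hq0 : 0 ≤ q) (hq1 : q ≤ 1) (hz : z < 1) (k : ℕ) :
    0 < 1 - z * q ^ k := by
  have hqk : q ^ k ≤ 1 := pow_le_one₀ hq0 hq1
  have : z * q ^ k < 1 := by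
    rcases le_or_gt z 0 with h | h
    · nlinarith [pow_nonneg hq0 k]
    · nlinarith
  linarith

lemma qpInf_pos {z q : ℝ} (hq0 : 0 ≤ q) (hq1 : q < 1) (hz : z < 1) : 0 < qpInf z q := by
  have hlog : Summable fun k : ℕ => Real.log (1 - z * q ^ k) := by
    simpa only [sub_eq_add_neg] using Real.summable_log_one_add_of_summable
      (summable_neg_mul_pow z (abs_lt.2 ⟨by linarith, hq1⟩))
  rw [qpInf, ← Real.rexp_tsum_eq_tprod (one_sub_mul_pow_pos hq0 hq1.le hz) hlog]
  exact Real.exp_pos _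

lemma qp_zero (z q : ℝ) : qp z q 0 = 1 := Finset.prod_range_zero _

lemma qp_one (z q : ℝ) : qp z q 1 = 1 - z := by simp [qp]

lemma qp_succ (z q : ℝ) (n : ℕ) : qp z q (n + 1) = qp z q n * (1 - z * q ^ n) :=
  Finset.prod_range_succ _ n

lemma qp_pos {z q : ℝ} (hq0 : 0 ≤ q) (hq1 : q ≤ 1) (hz : z < 1) (n : ℕ) : 0 < qp z q n :=
  Finset.prod_pos fun k _ => one_sub_mul_pow_pos hq0 hq1 hz k

section

variable {q : ℝ} (hq0 : 0 < q) (hq1 : q < 1)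
include hq0 hq1

-- At `n = 0` this is `(1;q)_∞ = 0`.
lemma qpInf_pow_eq (n : ℕ) : qpInf (q ^ n) q = (1 - q ^ n) * qpInf (q ^ (n + 1)) q := by
  rw [qpInf_eq_one_sub_mul _ (abs_lt.2 ⟨by linarith, hq1⟩), pow_succ]

lemma qpInf_pow_pos (n : ℕ) (hn : 1 ≤ n) : 0 < qpInf (q ^ n) q :=
  qpInf_pos hq0.le hq1 (pow_lt_one₀ hq0.le hq1 (by omega))

lemma Δ_self (n : ℕ) : Δ q q n = q ^ n * qpInf (q ^ (n + 1)) q := by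
  rw [Δ, qpInf_pow_eq hq0 hq1 n, ← pow_succ']
  ring

lemma Ct_self (n : ℕ) : Ct q q n = (-1) ^ n * q ^ (-(n : ℝ) / 2 - 1 / 4) := by
  set r := q ^ ((n : ℝ) / 2 + 1 / 4) with hr
  have hr0 : 0 < r := Real.rpow_pos_of_pos hq0 _
  have hP : 0 < qpInf (q ^ (n + 1 + 1)) q := qpInf_pow_pos hq0 hq1 (n + 2) (by omega)
  have ha : 0 < 1 - q ^ (n + 1) := by
    have := pow_lt_one₀ hq0.le hq1 (n := n + 1) (by omega); linarith
  have hr4 : q ^ (2 * n + 1) = r ^ 4 := by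
    rw [hr, ← Real.rpow_mul_natCast hq0.le, ← Real.rpow_natCast]
    push_cast; ring_nf
  have hqp : qp q q (n + 1) / qp q q n = 1 - q ^ (n + 1) := by
    rw [qp_succ, mul_div_cancel_left₀ _ (qp_pos hq0.le hq1.le hq1 n).ne', ← pow_succ']
  have hΔ : Δ q q n * Δ q q (n + 1) =
      (1 - q ^ (n + 1)) * (r ^ 2 * qpInf (q ^ (n + 1 + 1)) q) ^ 2 := by
    rw [Δ_self hq0 hq1, Δ_self hq0 hq1, qpInf_pow_eq hq0 hq1 (n + 1)]
    linear_combination (1 - q ^ (n + 1)) * qpInf (q ^ (n + 1 + 1)) q ^ 2 * hr4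
  rw [Ct, hqp, hΔ, Real.sqrt_mul ha.le, Real.sqrt_sq (by positivity), ← pow_succ',
    show -(n : ℝ) / 2 - 1 / 4 = -((n : ℝ) / 2 + 1 / 4) by ring, Real.rpow_neg hq0.le, ← hr]
  field_simp

lemma bt_self (k n : ℕ) :
    bt q q k n = (-1) ^ (n + k) * q ^ (-(n : ℝ) / 2 - 1 / 4) * qbinom q n k *
      (q ^ ((k : ℝ) ^ 2 + (k : ℝ) / 2) / qp q q (k + 1)) *
      (1 - q ^ (k + 1) - (1 - q ^ k) * (1 - q ^ (n + 1))) := by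
  have hratio : qpInf (q ^ (n + 1)) q / qpInf (q * q ^ (n + 1)) q = 1 - q ^ (n + 1) := by
    rw [qpInf_pow_eq hq0 hq1 (n + 1), ← pow_succ',
      mul_div_cancel_right₀ _ (qpInf_pow_pos hq0 hq1 (n + 2) (by omega)).ne']
  have hk : 1 - q ^ (k + 1) ≠ 0 := by
    rw [pow_succ']; exact (one_sub_mul_pow_pos hq0.le hq1.le hq1 k).ne'
  have hqp := (qp_pos hq0.le hq1.le hq1 k).ne'
  rw [bt, Ct_self hq0 hq1, hratio, qp_succ, ← pow_succ', pow_add (-1 : ℝ) n k]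
  field_simp

lemma qbinom_self (n : ℕ) : qbinom q n n = 1 := by
  rw [qbinom, Nat.sub_self, qp_zero, mul_one, div_self (qp_pos hq0.le hq1.le hq1 n).ne']

lemma bt_self_diag (n : ℕ) : bt q q n n = q ^ ((n : ℝ) ^ 2 + n - 1 / 4) / qp q q n := by
  have hn := (one_sub_mul_pow_pos hq0.le hq1.le hq1 n).ne'
  have hexp : q ^ ((n : ℝ) ^ 2 + n - 1 / 4) =
      q ^ (-(n : ℝ) / 2 - 1 / 4) * q ^ ((n : ℝ) ^ 2 + (n : ℝ) / 2) * q ^ n := by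
    rw [← Real.rpow_add hq0, ← Real.rpow_add_natCast hq0.ne']
    ring_nf
  rw [bt_self hq0 hq1, qbinom_self hq0 hq1, ← two_mul, pow_mul, neg_one_sq, one_pow, hexp,
    qp_succ, pow_succ']
  field_simp
  ring

lemma bt_self_superdiag (n : ℕ) :
    bt q q n (n + 1) = -(q ^ ((n : ℝ) ^ 2 - 3 / 4) *
      (q ^ n * (1 - q) + q ^ (n + 2) * (1 - q ^ n)) / (qp q q n * (1 - q))) := by
  have hn := (one_sub_mul_pow_pos hq0.le hq1.le hq1 n).ne'
  have hq : 1 - q ≠ 0 := by linarith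
  have hqbinom : qbinom q (n + 1) n = qp q q (n + 1) / (qp q q n * (1 - q)) := by
    rw [qbinom, Nat.add_sub_cancel_left, qp_one]
  have hexp : q ^ ((n : ℝ) ^ 2 - 3 / 4) =
      q ^ (-((n + 1 : ℕ) : ℝ) / 2 - 1 / 4) * q ^ ((n : ℝ) ^ 2 + (n : ℝ) / 2) := by
    rw [← Real.rpow_add hq0]
    push_cast
    ring_nf
  have hsign : (-1 : ℝ) ^ (n + 1 + n) = -1 := by
    rw [show n + 1 + n = 2 * n + 1 by ring, pow_succ, pow_mul, neg_one_sq, one_pow, one_mul]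
  have hqp := (qp_pos hq0.le hq1.le hq1 n).ne'
  rw [bt_self hq0 hq1, hqbinom, hsign, hexp, qp_succ]
  field_simp
  ring

lemma bt_self_diag_div_succ (n : ℕ) :
    bt q q n n / bt q q (n + 1) (n + 1) = (1 - q ^ (n + 1)) * q ^ (-2 * (n : ℝ) - 2) := by
  have hqp := (qp_pos hq0.le hq1.le hq1 n).ne'
  have hexp : q ^ ((n : ℝ) ^ 2 + n - 1 / 4) /
      q ^ (((n + 1 : ℕ) : ℝ) ^ 2 + (n + 1 : ℕ) - 1 / 4) =
      q ^ (-2 * (n : ℝ) - 2) := by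
    rw [← Real.rpow_sub hq0]
    push_cast
    ring_nf
  rw [bt_self_diag hq0 hq1, bt_self_diag hq0 hq1, qp_succ, ← pow_succ', ← hexp]
  field_simp

lemma bt_self_superdiag_div_diag (n : ℕ) :
    bt q q n (n + 1) / bt q q (n + 1) (n + 1) = -(q ^ (-3 * (n : ℝ) - 5 / 2) *
      ((1 - q ^ (n + 1)) * (q ^ n * (1 - q) + q ^ (n + 2) * (1 - q ^ n)) / (1 - q))) := by
  have hqp := (qp_pos hq0.le hq1.le hq1 n).ne'
  have hq : 1 - q ≠ 0 := by linarith
  have hexp : q ^ ((n : ℝ) ^ 2 - 3 / 4) /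
      q ^ (((n + 1 : ℕ) : ℝ) ^ 2 + (n + 1 : ℕ) - 1 / 4) =
      q ^ (-3 * (n : ℝ) - 5 / 2) := by
    rw [← Real.rpow_sub hq0]
    push_cast
    ring_nf
  rw [bt_self_superdiag hq0 hq1, bt_self_diag hq0 hq1, qp_succ, ← pow_succ', ← hexp]
  field_simp

end

theorem stmt_13 (p q : ℝ) (hq0 : 0 < q) (hq1 : q < 1) (hpq : p = q) :
    (∀ n k : ℕ, k ≤ n →
      bt p q k n = (-1) ^ (n + k) * q ^ (-(n : ℝ) / 2 - 1 / 4) * qbinom q n k *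
        (q ^ ((k : ℝ) ^ 2 + (k : ℝ) / 2) / qp q q (k + 1)) *
        (1 - q ^ (k + 1) - (1 - q ^ k) * (1 - q ^ (n + 1)))) ∧
    (-(bt p q 0 1) / bt p q 1 1
        = (1 + q ^ 3 - (1 + q ^ 2) * q ^ 1) * q ^ (-2 * (1 : ℝ) - 1 / 2)) ∧
    (∀ n : ℕ, 1 ≤ n →
      bt p q (n - 1) n / bt p q n n - bt p q n (n + 1) / bt p q (n + 1) (n + 1)
        = (1 + q ^ 3 - (1 + q ^ 2) * q ^ (n + 1)) * q ^ (-2 * ((n : ℝ) + 1) - 1 / 2)) ∧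
    (∀ n : ℕ, 1 ≤ n →
      (bt p q (n - 1) (n - 1) / bt p q n n) ^ 2
        = (1 - q ^ n) ^ 2 * q ^ (-(4 : ℝ) * (n : ℝ))) := by
  subst p
  have hq : 1 - q ≠ 0 := by linarith
  refine ⟨fun n k _ => bt_self hq0 hq1 k n, ?_, fun n hn => ?_, fun n hn => ?_⟩
  · rw [neg_div, bt_self_superdiag_div_diag hq0 hq1 0,
      show -3 * ((0 : ℕ) : ℝ) - 5 / 2 = -2 * 1 - 1 / 2 by norm_num]
    field_simp
    ring
  · obtain ⟨m, rfl⟩ := Nat.exists_eq_add_of_le' hn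
    rw [Nat.add_sub_cancel, bt_self_superdiag_div_diag hq0 hq1,
      bt_self_superdiag_div_diag hq0 hq1]
    set e := q ^ (-3 * ((m + 1 : ℕ) : ℝ) - 5 / 2)
    have h₁ : q ^ (-3 * (m : ℝ) - 5 / 2) = e * q ^ 3 := by
      rw [← Real.rpow_add_natCast hq0.ne']; push_cast; ring_nf
    have h₂ : q ^ (-2 * (((m + 1 : ℕ) : ℝ) + 1) - 1 / 2) = e * q ^ (m + 1) := by
      rw [← Real.rpow_add_natCast hq0.ne']; push_cast; ring_nf
    rw [h₁, h₂]
    field_simp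
    ring
  · obtain ⟨m, rfl⟩ := Nat.exists_eq_add_of_le' hn
    rw [Nat.add_sub_cancel, bt_self_diag_div_succ hq0 hq1, mul_pow,
      ← Real.rpow_mul_natCast hq0.le]
    push_cast
    ring_nf
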